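/- arXiv:0710.5426 — 5 statements merged into one kernel-verified Lean document; each statement's English description precedes it below -/
import Mathlib

section
/- For each i, j ≥ 0, the Brown-Gitler subspace N_i(j) ⊆ (A // A(i))_*, defined as the span of all monomials of Brown-Gitler filtration at most 2^{i+1} j, is an A_*-subcomodule of (A // A(i))_*. -/
/-!
Both `ψ` and the Brown-Gitler weight are multiplicative, and the subspaces `A_* ⊗ N_w`, with `N_w`
spanned by the monomials of `(A ⫽ A(i))_*` of weight at most `w`, form a multiplicative filtration
of `A_* ⊗ A_*`. So it suffices to check the algebra generators `ξ̄_{k+1}^{2^s}`, `s = i + 1 - k`,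
of `(A ⫽ A(i))_*`. As `2^s`-th powers are additive in characteristic 2,
`ψ(ξ̄_{k+1})^{2^s} = Σ_p ξ̄_p^{2^s} ⊗ ξ̄_{k+1-p}^{2^{p+s}}`, and each right-hand factor lies again in
`(A ⫽ A(i))_*`, with weight `2^{p+s} · 2^{k-p} = 2^{s+k}`, the weight of `ξ̄_{k+1}^{2^s}`.
-/

open TensorProduct

/-- The mod 2 dual Steenrod algebra, presented as a polynomial algebra on the
conjugate Milnor generators: `MvPolynomial.X k` represents `ξ̄_{k+1}`. -/
abbrev DualSteenrod : Type := MvPolynomial ℕ (ZMod 2)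

/-- `xb k` is the conjugate Milnor generator `ξ̄_k`, with `ξ̄_0 = 1`. -/
noncomputable def xb : ℕ → DualSteenrod
  | 0 => 1
  | k + 1 => MvPolynomial.X k

/-- The coproduct of the dual Steenrod algebra, given on the conjugate generators
by `ψ(ξ̄_k) = Σ_{k₁+k₂=k} ξ̄_{k₁} ⊗ ξ̄_{k₂}^{2^{k₁}}`. -/
noncomputable def psi : DualSteenrod →ₐ[ZMod 2] DualSteenrod ⊗[ZMod 2] DualSteenrod :=
  MvPolynomial.aeval fun n =>
    ∑ p ∈ Finset.range (n + 2), (xb p) ⊗ₜ[ZMod 2] ((xb (n + 1 - p)) ^ (2 ^ p))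

/-- The Brown-Gitler weight of a monomial: `ξ̄_{k+1}` (the variable `X k`) has
weight `2^k`. -/
def bgWeight (d : ℕ →₀ ℕ) : ℕ := d.sum fun k e => e * 2 ^ k

/-- The condition for a monomial to lie in `(A ⫽ A(i))_*`: the exponent of
`ξ̄_{k+1}` must be divisible by `2^{i+1-k}` (truncated subtraction). -/
def isAAmonomial (i : ℕ) (d : ℕ →₀ ℕ) : Prop := ∀ k, 2 ^ (i + 1 - k) ∣ d k

/-- The Brown-Gitler comodule `N_i(j)`: the span of the monomials of
`(A ⫽ A(i))_*` of Brown-Gitler filtration at most `2^{i+1} j`. -/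
noncomputable def BrownGitler (i j : ℕ) : Submodule (ZMod 2) DualSteenrod :=
  Submodule.span (ZMod 2)
    {m | ∃ d : ℕ →₀ ℕ, isAAmonomial i d ∧ bgWeight d ≤ 2 ^ (i + 1) * j ∧
      m = MvPolynomial.monomial d 1}

open MvPolynomial

section LeftTensorSpan

variable {R A B : Type*} [CommSemiring R] [Semiring A] [Algebra R A] [Semiring B] [Algebra R B]

variable (A) in
/-- The image of `A ⊗ N` in `A ⊗ B`. -/
def leftTensorSpan (N : Submodule R B) : Submodule R (A ⊗[R] B) :=
  Submodule.span R {t | ∃ a : A, ∃ n ∈ N, t = a ⊗ₜ[R] n}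

lemma tmul_mem_leftTensorSpan (a : A) {N : Submodule R B} {n : B} (hn : n ∈ N) :
    a ⊗ₜ[R] n ∈ leftTensorSpan A N :=
  Submodule.subset_span ⟨a, n, hn, rfl⟩

lemma leftTensorSpan_mono {N₁ N₂ : Submodule R B} (h : N₁ ≤ N₂) :
    leftTensorSpan A N₁ ≤ leftTensorSpan A N₂ :=
  Submodule.span_le.2 fun _ ⟨a, _, hn, ht⟩ => ht ▸ tmul_mem_leftTensorSpan a (h hn)

lemma leftTensorSpan_mul_le (N₁ N₂ : Submodule R B) :
    leftTensorSpan A N₁ * leftTensorSpan A N₂ ≤ leftTensorSpan A (N₁ * N₂) := by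
  rw [leftTensorSpan, leftTensorSpan, Submodule.span_mul_span, Submodule.span_le]
  rintro _ ⟨_, ⟨a, n, hn, rfl⟩, _, ⟨a', n', hn', rfl⟩, rfl⟩
  dsimp only
  rw [Algebra.TensorProduct.tmul_mul_tmul]
  exact tmul_mem_leftTensorSpan _ (Submodule.mul_mem_mul hn hn')

lemma one_mem_leftTensorSpan {N : Submodule R B} (h : 1 ∈ N) :
    (1 : A ⊗[R] B) ∈ leftTensorSpan A N :=
  tmul_mem_leftTensorSpan 1 h

instance leftTensorSpan.gradedMonoid {ι : Type*} [AddMonoid ι] (F : ι → Submodule R B)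
    [SetLike.GradedMonoid F] : SetLike.GradedMonoid fun w => leftTensorSpan A (F w) where
  one_mem := one_mem_leftTensorSpan SetLike.GradedOne.one_mem
  mul_mem _ _ _ _ hu hv := leftTensorSpan_mono
    (Submodule.mul_le.2 fun _ hm _ hn => SetLike.mul_mem_graded hm hn)
    (leftTensorSpan_mul_le _ _ (Submodule.mul_mem_mul hu hv))

end LeftTensorSpan

lemma bgWeight_add (d e : ℕ →₀ ℕ) : bgWeight (d + e) = bgWeight d + bgWeight e :=
  Finsupp.sum_add_index' (fun _ => zero_mul _) fun _ _ _ => add_mul _ _ _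

lemma bgWeight_single (k e : ℕ) : bgWeight (Finsupp.single k e) = e * 2 ^ k :=
  Finsupp.sum_single_index (zero_mul _)

lemma isAAmonomial_zero (i : ℕ) : isAAmonomial i 0 := fun _ => dvd_zero _

lemma isAAmonomial.add {i : ℕ} {d e : ℕ →₀ ℕ} (hd : isAAmonomial i d) (he : isAAmonomial i e) :
    isAAmonomial i (d + e) := fun k => dvd_add (hd k) (he k)

lemma isAAmonomial_single {i k e : ℕ} (he : 2 ^ (i + 1 - k) ∣ e) :
    isAAmonomial i (Finsupp.single k e) := by
  intro m
  rcases eq_or_ne k m with rfl | hm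
  · simpa using he
  · simp [hm]

/-- `BrownGitler i j = bgFiltration i (2 ^ (i + 1) * j)`. -/
noncomputable def bgFiltration (i w : ℕ) : Submodule (ZMod 2) DualSteenrod :=
  Submodule.span (ZMod 2)
    {m | ∃ d : ℕ →₀ ℕ, isAAmonomial i d ∧ bgWeight d ≤ w ∧ m = monomial d 1}

section bgFiltration

variable {i w : ℕ}

lemma monomial_mem_bgFiltration {d : ℕ →₀ ℕ} (hd : isAAmonomial i d) (hw : bgWeight d ≤ w) :
    monomial d 1 ∈ bgFiltration i w :=
  Submodule.subset_span ⟨d, hd, hw, rfl⟩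

lemma X_pow_mem_bgFiltration {k e : ℕ} (he : 2 ^ (i + 1 - k) ∣ e) (hw : e * 2 ^ k ≤ w) :
    X k ^ e ∈ bgFiltration i w := by
  rw [X_pow_eq_monomial]
  exact monomial_mem_bgFiltration (isAAmonomial_single he) ((bgWeight_single k e).trans_le hw)

lemma bgFiltration_mono {w' : ℕ} (h : w ≤ w') : bgFiltration i w ≤ bgFiltration i w' :=
  Submodule.span_mono fun _ ⟨d, hd, hw, hm⟩ => ⟨d, hd, hw.trans h, hm⟩

lemma bgFiltration_mul_le (w' : ℕ) :
    bgFiltration i w * bgFiltration i w' ≤ bgFiltration i (w + w') := by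
  rw [bgFiltration, bgFiltration, Submodule.span_mul_span, Submodule.span_le]
  rintro _ ⟨_, ⟨d, hd, hw, rfl⟩, _, ⟨d', hd', hw', rfl⟩, rfl⟩
  dsimp only
  rw [monomial_mul, one_mul]
  exact monomial_mem_bgFiltration (hd.add hd') (by rw [bgWeight_add]; omega)

instance (i : ℕ) : SetLike.GradedMonoid (bgFiltration i) where
  one_mem := by
    simpa using monomial_mem_bgFiltration (w := 0) (isAAmonomial_zero i) (by simp [bgWeight])
  mul_mem _ _ _ _ ha hb := bgFiltration_mul_le _ (Submodule.mul_mem_mul ha hb)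

end bgFiltration

lemma psi_X (k : ℕ) :
    psi (X k) = ∑ p ∈ Finset.range (k + 2), xb p ⊗ₜ[ZMod 2] (xb (k + 1 - p) ^ 2 ^ p) := by
  rw [psi, aeval_X]

instance : CharP (DualSteenrod ⊗[ZMod 2] DualSteenrod) 2 :=
  charP_of_injective_algebraMap' (ZMod 2) 2

lemma psi_X_pow_two_pow_mem (i k : ℕ) :
    psi (X k) ^ 2 ^ (i + 1 - k) ∈
      leftTensorSpan DualSteenrod (bgFiltration i (2 ^ (i + 1 - k) * 2 ^ k)) := by
  rw [psi_X, sum_pow_char_pow]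
  refine Submodule.sum_mem _ fun p _ => ?_
  rw [Algebra.TensorProduct.tmul_pow]
  refine tmul_mem_leftTensorSpan _ ?_
  rcases Nat.lt_or_ge p (k + 1) with hpk | hpk
  · obtain ⟨q, rfl⟩ : ∃ q, k = q + p := ⟨k - p, by omega⟩
    rw [show q + p + 1 - p = q + 1 by omega, xb, ← pow_mul, ← pow_add 2 p]
    refine X_pow_mem_bgFiltration (pow_dvd_pow 2 (by omega)) (le_of_eq ?_)
    rw [← pow_add, ← pow_add]
    congr 1
    omega
  · rw [show k + 1 - p = 0 by omega, xb, one_pow, one_pow]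
    exact bgFiltration_mono (Nat.zero_le _) SetLike.GradedOne.one_mem

lemma psi_monomial_mem {i : ℕ} {d : ℕ →₀ ℕ} (hd : isAAmonomial i d) :
    psi (monomial d 1) ∈ leftTensorSpan DualSteenrod (bgFiltration i (bgWeight d)) := by
  rw [monomial_eq, C_1, one_mul, Finsupp.prod, map_prod, bgWeight, Finsupp.sum]
  refine SetLike.prod_mem_graded (fun w => leftTensorSpan DualSteenrod (bgFiltration i w)) _ _
    fun k _ => ?_
  obtain ⟨m, hm⟩ := hd k
  rw [map_pow, hm, pow_mul, show 2 ^ (i + 1 - k) * m * 2 ^ k = m • (2 ^ (i + 1 - k) * 2 ^ k) by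
    rw [smul_eq_mul]; ring]
  exact SetLike.pow_mem_graded (A := fun w => leftTensorSpan DualSteenrod (bgFiltration i w)) m
    (psi_X_pow_two_pow_mem i k)

lemma bgFiltration_le_comap_psi (i w : ℕ) :
    bgFiltration i w ≤ (leftTensorSpan DualSteenrod (bgFiltration i w)).comap psi.toLinearMap :=
  Submodule.span_le.2 fun _ ⟨_, hd, hw, hm⟩ =>
    hm ▸ leftTensorSpan_mono (bgFiltration_mono hw) (psi_monomial_mem hd)

/-- `N_i(j)` is an `A_*`-subcomodule of `(A ⫽ A(i))_*`, i.e. the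
coproduct (coaction) of the dual Steenrod algebra takes `N_i(j)` into
`A_* ⊗ N_i(j)`. -/
theorem stmt4 (i j : ℕ) (x : DualSteenrod) (hx : x ∈ BrownGitler i j) :
    psi x ∈ Submodule.span (ZMod 2)
      {t : DualSteenrod ⊗[ZMod 2] DualSteenrod |
        ∃ a : DualSteenrod, ∃ n ∈ BrownGitler i j, t = a ⊗ₜ[ZMod 2] n} :=
  bgFiltration_le_comap_psi i (2 ^ (i + 1) * j) hx
end

section
/- For i ≥ 1, the map of ungraded rings φ_i : (A // A(i))_* → (A // A(i-1))_* determined on generators by φ_i(ξ̄_k^{2^l}) = ξ̄_{k-1}^{2^l} for k > 1 and φ_i(ξ̄_1^{2^l}) = 1 is a map of ungraded A(i)_*-comodules. -/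
open TensorProduct

/-- The ideal cutting out the quotient Hopf algebra `A(i)_*`. -/
noncomputable def steenrodIdeal (i : ℕ) : Ideal DualSteenrod :=
  Ideal.span (Set.range fun k : ℕ => (MvPolynomial.X k : DualSteenrod) ^ (2 ^ (i + 1 - k)))

abbrev Aquot (i : ℕ) : Type := DualSteenrod ⧸ steenrodIdeal i

/-- The left `A(i)_*`-coaction on `A_*` (hence, by restriction, on any
`A_*`-subcomodule such as `(A ⫽ A(i))_*` or `(A ⫽ A(i-1))_*`). -/
noncomputable def coact (i : ℕ) : DualSteenrod →ₐ[ZMod 2] Aquot i ⊗[ZMod 2] DualSteenrod :=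
  (Algebra.TensorProduct.map (Ideal.Quotient.mkₐ (ZMod 2) (steenrodIdeal i))
    (AlgHom.id (ZMod 2) DualSteenrod)).comp psi

/-- The ungraded ring map `φ` with `φ(ξ̄_k) = ξ̄_{k-1}` (and `φ(ξ̄_1) = 1`); being a
ring map it sends `ξ̄_k^{2^l}` to `ξ̄_{k-1}^{2^l}`, and it restricts to the map
`φ_i : (A ⫽ A(i))_* → (A ⫽ A(i-1))_*`. -/
noncomputable def phi : DualSteenrod →ₐ[ZMod 2] DualSteenrod :=
  MvPolynomial.aeval fun k => xb k

/-- The subalgebra `(A ⫽ A(i))_* = F₂[ξ̄_1^{2^{i+1}}, …, ξ̄_{i+1}^2, ξ̄_{i+2}, …]`. -/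
noncomputable def AmodAi (i : ℕ) : Subalgebra (ZMod 2) DualSteenrod :=
  Algebra.adjoin (ZMod 2)
    (Set.range fun k : ℕ => (MvPolynomial.X k : DualSteenrod) ^ (2 ^ (i + 1 - k)))

/-!
Both sides are algebra maps `A_* → A(i)_* ⊗ A_*`, so it suffices to compare them on the
generators `ξ̄_{k+1}^{2^{i+1-k}}` of `(A ⫽ A(i))_*`. On `ξ̄_{k+1}` itself, `(id ⊗ φ) ∘ ψ` is
`ψ ∘ φ` (with `ψ` reduced to `A(i)_*` on the left) plus the single extra term `ξ̄_{k+1} ⊗ 1`. Raising to the power `2^{i+1-k}` is additive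
in characteristic 2, and the extra term becomes `ξ̄_{k+1}^{2^{i+1-k}} ⊗ 1`, which is zero in
`A(i)_* ⊗ A_*`.
-/

theorem two_eq_zero_of_zmod_two_algebra {R : Type*} [Semiring R] [Algebra (ZMod 2) R] :
    (2 : R) = 0 := by
  calc (2 : R) = algebraMap (ZMod 2) R 2 := (map_ofNat _ 2).symm
    _ = 0 := by rw [show (2 : ZMod 2) = 0 from rfl, map_zero]

/-- Unlike `add_pow_char_pow`, this needs no `CharP` instance, which would require knowing that
the ring is nontrivial. -/
theorem add_pow_two_pow_of_two_eq_zero {R : Type*} [CommSemiring R] (h : (2 : R) = 0)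
    (x y : R) (n : ℕ) : (x + y) ^ 2 ^ n = x ^ 2 ^ n + y ^ 2 ^ n := by
  obtain ⟨r, hr⟩ := (Commute.all x y).exists_add_pow_prime_pow_eq Nat.prime_two n
  simp [hr, h]

theorem phi_xb_succ (k : ℕ) : phi (xb (k + 1)) = xb k := by
  simp [phi, xb]

theorem coact_xb (i k : ℕ) :
    coact i (xb k) = ∑ p ∈ Finset.range (k + 1),
      Ideal.Quotient.mk (steenrodIdeal i) (xb p) ⊗ₜ[ZMod 2] (xb (k - p) ^ 2 ^ p) := by
  cases k with
  | zero => simpa [xb] using (coact i).map_one.trans Algebra.TensorProduct.one_def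
  | succ k =>
    simp only [xb, coact, psi, AlgHom.comp_apply, MvPolynomial.aeval_X, map_sum,
      Algebra.TensorProduct.map_tmul, Ideal.Quotient.mkₐ_eq_mk, AlgHom.id_apply]

/-- The term `p = k + 1` of `ψ(ξ̄_{k+1})` is `ξ̄_{k+1} ⊗ ξ̄_0`; `φ` shifts all the others to the
terms of `ψ(ξ̄_k)`. -/
theorem map_phi_coact_xb_succ (i k : ℕ) :
    Algebra.TensorProduct.map (AlgHom.id (ZMod 2) (Aquot i)) phi (coact i (xb (k + 1))) =
      coact i (phi (xb (k + 1))) +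
        Ideal.Quotient.mk (steenrodIdeal i) (xb (k + 1)) ⊗ₜ[ZMod 2] 1 := by
  rw [coact_xb, Finset.sum_range_succ, map_add, map_sum, phi_xb_succ, coact_xb]
  congr 1
  · refine Finset.sum_congr rfl fun p hp => ?_
    rw [Algebra.TensorProduct.map_tmul, AlgHom.id_apply, map_pow,
      Nat.sub_add_comm (Nat.lt_succ_iff.mp (Finset.mem_range.mp hp)), phi_xb_succ]
  · simp [xb]

theorem map_phi_coact_generator (i k : ℕ) :
    Algebra.TensorProduct.map (AlgHom.id (ZMod 2) (Aquot i)) phi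
        (coact i ((MvPolynomial.X k : DualSteenrod) ^ 2 ^ (i + 1 - k))) =
      coact i (phi ((MvPolynomial.X k : DualSteenrod) ^ 2 ^ (i + 1 - k))) := by
  have hgen : Ideal.Quotient.mk (steenrodIdeal i) (xb (k + 1)) ^ 2 ^ (i + 1 - k) = 0 := by
    rw [← map_pow, Ideal.Quotient.eq_zero_iff_mem]
    exact Ideal.subset_span ⟨k, rfl⟩
  -- `map_pow` cannot find the `MonoidHomClass` instance for `coact i`.
  have hcoact_pow (x : DualSteenrod) (n : ℕ) : coact i (x ^ n) = coact i x ^ n :=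
    (coact i).toRingHom.map_pow x n
  calc _ = (coact i (phi (xb (k + 1))) +
          Ideal.Quotient.mk (steenrodIdeal i) (xb (k + 1)) ⊗ₜ[ZMod 2] 1) ^ 2 ^ (i + 1 - k) := by
        rw [show (MvPolynomial.X k : DualSteenrod) = xb (k + 1) from rfl, hcoact_pow, map_pow,
          map_phi_coact_xb_succ]
    _ = coact i (phi (xb (k + 1))) ^ 2 ^ (i + 1 - k) +
          (Ideal.Quotient.mk (steenrodIdeal i) (xb (k + 1)) ⊗ₜ[ZMod 2] (1 : DualSteenrod)) ^
            2 ^ (i + 1 - k) :=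
        add_pow_two_pow_of_two_eq_zero two_eq_zero_of_zmod_two_algebra _ _ _
    _ = _ := by
        rw [Algebra.TensorProduct.tmul_pow, one_pow, hgen, TensorProduct.zero_tmul, add_zero,
          ← hcoact_pow, ← map_pow]
        rfl

theorem stmt5_general (i : ℕ) (a : DualSteenrod) (ha : a ∈ AmodAi i) :
    (TensorProduct.map (LinearMap.id : Aquot i →ₗ[ZMod 2] Aquot i) phi.toLinearMap)
        (coact i a) = coact i (phi a) :=
  AlgHom.eqOn_adjoin_iff
      (φ := (Algebra.TensorProduct.map (AlgHom.id (ZMod 2) (Aquot i)) phi).comp (coact i))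
      (ψ := (coact i).comp phi)
    |>.mpr (Set.forall_mem_range.mpr (map_phi_coact_generator i)) ha

/-- for `i ≥ 1`, the ungraded ring map
`φ_i : (A ⫽ A(i))_* → (A ⫽ A(i-1))_*`, `ξ̄_k^{2^l} ↦ ξ̄_{k-1}^{2^l}` (`k > 1`),
`ξ̄_1^{2^l} ↦ 1`, is a map of ungraded `A(i)_*`-comodules: it intertwines the
`A(i)_*`-coactions on `(A ⫽ A(i))_*` and `(A ⫽ A(i-1))_*`. -/
theorem stmt5 (i : ℕ) (hi : 1 ≤ i) (a : DualSteenrod) (ha : a ∈ AmodAi i) :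
    (TensorProduct.map (LinearMap.id : Aquot i →ₗ[ZMod 2] Aquot i) phi.toLinearMap)
        (coact i a) = coact i (phi a) :=
  stmt5_general i a ha
end

section
/- For i ≥ 1 and j ≥ 0, let M_i(j) ⊆ (A // A(i))_* be the span of monomials of Brown-Gitler filtration exactly 2^{i+1} j. Then the map φ_i restricts to an isomorphism of ungraded F_2-vector spaces from M_i(j) onto the Brown-Gitler comodule N_{i-1}(j) ⊆ (A // A(i-1))_*. -/
/-!
On monomials `φ` forgets the exponent `a` of `ξ̄₁` and lowers the index of every other generator,
and the weights are related by `w(ξ̄₁^a x) = a + 2 w(φ x)` for `x` a monomial in `ξ̄₂, ξ̄₃, …`.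
On monomials of weight exactly `2^{i+1} j` the exponent `a` is therefore recovered from the image,
so `φ` sends the monomial basis of `M_i(j)` injectively to monomials, which are linearly
independent. Conversely a monomial `y` of `(A ⫽ A(i-1))_*` has weight divisible by `2^i`, so if
that weight is at most `2^i j` then `a = 2^{i+1} j - 2 w(y)` is a legal exponent of `ξ̄₁` in
`(A ⫽ A(i))_*`, and the monomial with exponents `a, y` lies in `M_i(j)` and maps to `y`.
-/

open TensorProduct

/-- The Brown-Gitler comodule `N_i(j) ⊆ (A ⫽ A(i))_*`: span of monomials of
Brown-Gitler filtration at most `2^{i+1} j`. -/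
noncomputable def BrownGitlerN (i j : ℕ) : Submodule (ZMod 2) DualSteenrod :=
  Submodule.span (ZMod 2)
    {m | ∃ d : ℕ →₀ ℕ, isAAmonomial i d ∧ bgWeight d ≤ 2 ^ (i + 1) * j ∧
      m = MvPolynomial.monomial d 1}

/-- `M_i(j) ⊆ (A ⫽ A(i))_*`: span of monomials of Brown-Gitler filtration exactly
`2^{i+1} j`. -/
noncomputable def BrownGitlerM (i j : ℕ) : Submodule (ZMod 2) DualSteenrod :=
  Submodule.span (ZMod 2)
    {m | ∃ d : ℕ →₀ ℕ, isAAmonomial i d ∧ bgWeight d = 2 ^ (i + 1) * j ∧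
      m = MvPolynomial.monomial d 1}

open MvPolynomial

noncomputable def tailExp {M : Type*} [Zero M] (d : ℕ →₀ M) : ℕ →₀ M :=
  Finsupp.comapDomain Nat.succ d Nat.succ_injective.injOn

noncomputable def consExp {M : Type*} [AddCommMonoid M] (a : M) (e : ℕ →₀ M) : ℕ →₀ M :=
  Finsupp.single 0 a + Finsupp.mapDomain Nat.succ e

section Exponents

variable {M : Type*}

@[simp] lemma tailExp_apply [Zero M] (d : ℕ →₀ M) (k : ℕ) : tailExp d k = d (k + 1) := rfl

variable [AddCommMonoid M]

@[simp] lemma consExp_apply_zero (a : M) (e : ℕ →₀ M) : consExp a e 0 = a := by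
  simp [consExp, Finsupp.mapDomain_of_notMem_range]

@[simp] lemma consExp_apply_succ (a : M) (e : ℕ →₀ M) (k : ℕ) : consExp a e (k + 1) = e k := by
  simp [consExp, Finsupp.mapDomain_apply Nat.succ_injective]

@[simp] lemma tailExp_consExp (a : M) (e : ℕ →₀ M) : tailExp (consExp a e) = e := by
  ext k; simp

lemma consExp_tailExp (d : ℕ →₀ M) : consExp (d 0) (tailExp d) = d := by
  ext (_ | k) <;> simp

end Exponents

lemma bgWeight_consExp (a : ℕ) (e : ℕ →₀ ℕ) : bgWeight (consExp a e) = a + 2 * bgWeight e := by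
  simp only [bgWeight, consExp]
  rw [Finsupp.sum_add_index' (by simp) (fun _ _ _ => add_mul _ _ _),
    Finsupp.sum_single_index (zero_mul _), Finsupp.sum_mapDomain_index (fun _ => zero_mul _)
      (fun _ _ _ => add_mul _ _ _), Finsupp.mul_sum]
  simp only [pow_zero, mul_one, pow_succ]
  congr 1
  exact Finsupp.sum_congr fun _ _ => by ring

lemma isAAmonomial_consExp_iff (n a : ℕ) (e : ℕ →₀ ℕ) :
    isAAmonomial (n + 1) (consExp a e) ↔ 2 ^ (n + 2) ∣ a ∧ isAAmonomial n e := by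
  refine ⟨fun h => ⟨by simpa using h 0, fun k => by simpa using h (k + 1)⟩, ?_⟩
  rintro ⟨ha, he⟩ (_ | k)
  · simpa using ha
  · simpa using he k

lemma two_pow_dvd_bgWeight {i : ℕ} {d : ℕ →₀ ℕ} (hd : isAAmonomial i d) :
    2 ^ (i + 1) ∣ bgWeight d := by
  refine Finset.dvd_sum fun k _ => ?_
  rcases le_or_gt k (i + 1) with hk | hk
  · rw [← Nat.sub_add_cancel hk, pow_add]
    exact mul_dvd_mul (hd k) dvd_rfl
  · exact (pow_dvd_pow 2 hk.le).trans (dvd_mul_left _ _)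

lemma phi_monomial_consExp (a : ℕ) (e : ℕ →₀ ℕ) :
    phi (monomial (consExp a e) 1) = monomial e 1 := by
  have hrename : phi.comp (rename Nat.succ) = AlgHom.id _ _ := by
    ext k; simp [phi, xb]
  rw [consExp, ← mul_one (1 : ZMod 2), ← monomial_mul, ← rename_monomial, map_mul,
    ← AlgHom.comp_apply phi, hrename]
  simp [phi, xb, ← X_pow_eq_monomial]

lemma phi_monomial (d : ℕ →₀ ℕ) : phi (monomial d 1) = monomial (tailExp d) 1 := by
  conv_lhs => rw [← consExp_tailExp d]
  exact phi_monomial_consExp _ _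

def bgExponentsEq (i j : ℕ) : Set (ℕ →₀ ℕ) :=
  {d | isAAmonomial i d ∧ bgWeight d = 2 ^ (i + 1) * j}

def bgExponentsLE (i j : ℕ) : Set (ℕ →₀ ℕ) :=
  {d | isAAmonomial i d ∧ bgWeight d ≤ 2 ^ (i + 1) * j}

lemma brownGitlerM_eq_span (i j : ℕ) :
    BrownGitlerM i j = Submodule.span (ZMod 2) ((monomial · 1) '' bgExponentsEq i j) := by
  simp only [BrownGitlerM, bgExponentsEq, Set.image, Set.mem_ofPred_eq, and_assoc, eq_comm]

lemma brownGitlerN_eq_span (i j : ℕ) :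
    BrownGitlerN i j = Submodule.span (ZMod 2) ((monomial · 1) '' bgExponentsLE i j) := by
  simp only [BrownGitlerN, bgExponentsLE, Set.image, Set.mem_ofPred_eq, and_assoc, eq_comm]

lemma bijOn_tailExp (n j : ℕ) :
    Set.BijOn tailExp (bgExponentsEq (n + 1) j) (bgExponentsLE n j) := by
  have h2 : 2 ^ (n + 1 + 1) * j = 2 * (2 ^ (n + 1) * j) := by ring
  refine ⟨?mapsTo, ?injOn, ?surjOn⟩
  case mapsTo =>
    intro d ⟨hd, hw⟩
    rw [← consExp_tailExp d, isAAmonomial_consExp_iff] at hd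
    rw [← consExp_tailExp d, bgWeight_consExp] at hw
    exact ⟨hd.2, by omega⟩
  case injOn =>
    intro d ⟨_, hw⟩ d' ⟨_, hw'⟩ htail
    rw [← consExp_tailExp d, bgWeight_consExp] at hw
    rw [← consExp_tailExp d', bgWeight_consExp, ← htail] at hw'
    rw [← consExp_tailExp d, ← consExp_tailExp d', htail, show d 0 = d' 0 by omega]
  case surjOn =>
    intro e ⟨he, hw⟩
    refine ⟨consExp (2 ^ (n + 1 + 1) * j - 2 * bgWeight e) e, ⟨?_, ?_⟩, tailExp_consExp _ _⟩
    · refine (isAAmonomial_consExp_iff _ _ _).2 ⟨Nat.dvd_sub (dvd_mul_right _ _) ?_, he⟩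
      exact pow_succ' 2 (n + 1) ▸ mul_dvd_mul_left 2 (two_pow_dvd_bgWeight he)
    · rw [bgWeight_consExp]
      omega

lemma map_phi_span_monomial (S : Set (ℕ →₀ ℕ)) :
    (Submodule.span (ZMod 2) ((monomial · 1) '' S)).map phi.toLinearMap =
      Submodule.span (ZMod 2) ((monomial · 1) '' (tailExp '' S)) := by
  simp only [Submodule.map_span, Set.image_image, AlgHom.toLinearMap_apply, phi_monomial]

lemma LinearMap.eq_zero_of_mem_span_of_linearIndepOn {R M N ι : Type*} [Semiring R]
    [AddCommMonoid M] [Module R M] [AddCommMonoid N] [Module R N] {f : M →ₗ[R] N}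
    {v : ι → M} {s : Set ι} (hli : LinearIndepOn R (f ∘ v) s) {x : M}
    (hx : x ∈ Submodule.span R (v '' s)) (hfx : f x = 0) : x = 0 := by
  obtain ⟨l, hl, rfl⟩ := (Finsupp.mem_span_image_iff_linearCombination R).1 hx
  rw [Finsupp.apply_linearCombination] at hfx
  obtain rfl := linearIndepOn_iffₛ.1 hli l hl 0 (zero_mem _) (by rw [hfx, map_zero])
  exact map_zero _

lemma phi_eq_zero_of_mem_span_monomial {S : Set (ℕ →₀ ℕ)} (hS : Set.InjOn tailExp S)
    {x : DualSteenrod} (hx : x ∈ Submodule.span (ZMod 2) ((monomial · 1) '' S))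
    (hphi : phi x = 0) : x = 0 := by
  refine phi.toLinearMap.eq_zero_of_mem_span_of_linearIndepOn ?_ hx hphi
  have hmon : LinearIndependent (ZMod 2) (fun d : ℕ →₀ ℕ => (monomial d 1 : DualSteenrod)) := by
    simpa [coe_basisMonomials] using (basisMonomials ℕ (ZMod 2)).linearIndependent
  have hphi_mon : phi.toLinearMap ∘ (monomial · 1) = (monomial · 1) ∘ tailExp :=
    funext phi_monomial
  rw [hphi_mon]
  exact (hmon.linearIndepOn _).comp_of_image hS

/-- for `i ≥ 1` and `j ≥ 0`, the map `φ_i` carries the subspace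
`M_i(j)` isomorphically (as ungraded `F₂`-vector spaces) onto the Brown-Gitler
comodule `N_{i-1}(j) ⊆ (A ⫽ A(i-1))_*`: its image is `N_{i-1}(j)` and it is
injective on `M_i(j)`. -/
theorem stmt6 (i : ℕ) (hi : 1 ≤ i) (j : ℕ) :
    Submodule.map phi.toLinearMap (BrownGitlerM i j) = BrownGitlerN (i - 1) j ∧
    ∀ x ∈ BrownGitlerM i j, phi x = 0 → x = 0 := by
  obtain ⟨n, rfl⟩ : ∃ n, i = n + 1 := ⟨i - 1, by omega⟩
  rw [Nat.add_sub_cancel, brownGitlerM_eq_span]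
  refine ⟨?_, fun x hx => phi_eq_zero_of_mem_span_monomial (bijOn_tailExp n j).injOn hx⟩
  rw [map_phi_span_monomial, (bijOn_tailExp n j).image_eq, brownGitlerN_eq_span]
end

section
/- As F_2-vector spaces, the image of N_1(2j+1) under the isomorphism τ decomposes as τ(N_1(2j+1)) = (N_2(j-1) ⊗ (A(2) // A(1))_*) ⊕ (M_2(j) ⊗ N_1(1)), where N_1(1) = F_2{1, ξ̄_1^4, ξ̄_2^2, ξ̄_3}. -/
/-!
`τ` is induced by a bijection of monomial bases: `d ↦ (dHigh d, dLow d)`, with inverse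
`(a, b) ↦ a + b`. Hence `τ(N₁(2j+1))` is spanned by the basis tensors `ξ̄^a ⊗ ξ̄^b` with
`w(a) + w(b) ≤ 8j + 4`. Since `8 ∣ w(a)` and `w(b) ≤ 12`, this holds exactly when
`w(a) ≤ 8(j - 1)`, or `w(a) = 8j` and `w(b) ≤ 4`. These two index sets are disjoint, so by
linear independence of the basis so are their spans.
-/

open TensorProduct

/-- Exterior residue `(4ε₁, 2ε₂, ε₃, 0, …)` of an exponent. -/
noncomputable def dLow (d : ℕ →₀ ℕ) : ℕ →₀ ℕ :=
  Finsupp.single 0 (d 0 % 8) + Finsupp.single 1 (d 1 % 4) + Finsupp.single 2 (d 2 % 2)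

/-- 2-divisible part `(8i₁, 4i₂, 2i₃, i₄, …)` of an exponent. -/
noncomputable def dHigh (d : ℕ →₀ ℕ) : ℕ →₀ ℕ := d - dLow d

/-- The monomial-splitting map `τ : (A ⫽ A(1))_* → (A ⫽ A(2))_* ⊗ (A(2) ⫽ A(1))_*`. -/
noncomputable def tau : DualSteenrod →ₗ[ZMod 2] DualSteenrod ⊗[ZMod 2] DualSteenrod :=
  (MvPolynomial.basisMonomials ℕ (ZMod 2)).constr (ZMod 2) fun d =>
    (MvPolynomial.monomial (dHigh d) 1) ⊗ₜ[ZMod 2] (MvPolynomial.monomial (dLow d) 1)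

def isAA1 (d : ℕ →₀ ℕ) : Prop := 4 ∣ d 0 ∧ 2 ∣ d 1

def isAA2 (d : ℕ →₀ ℕ) : Prop := 8 ∣ d 0 ∧ 4 ∣ d 1 ∧ 2 ∣ d 2

def isExtMono (d : ℕ →₀ ℕ) : Prop :=
  (d 0 = 0 ∨ d 0 = 4) ∧ (d 1 = 0 ∨ d 1 = 2) ∧ d 2 ≤ 1 ∧ ∀ k, 3 ≤ k → d k = 0

/-- The bo-Brown-Gitler comodule `N₁(m)`: span of monomials of `(A ⫽ A(1))_*` of
Brown-Gitler filtration at most `4m`. -/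
noncomputable def N1 (m : ℕ) : Submodule (ZMod 2) DualSteenrod :=
  Submodule.span (ZMod 2)
    {x | ∃ d, isAA1 d ∧ bgWeight d ≤ 4 * m ∧ x = MvPolynomial.monomial d 1}

/-- Exterior monomials in `N₁(1) = F₂{1, ξ̄_1^4, ξ̄_2^2, ξ̄_3}`. -/
def isN11Mono (d : ℕ →₀ ℕ) : Prop := isExtMono d ∧ bgWeight d ≤ 4

/-- `N₂(j-1) ⊗ (A(2) ⫽ A(1))_*`: basis tensors with left weight at most `8(j-1)`. -/
noncomputable def S1 (j : ℕ) : Submodule (ZMod 2) (DualSteenrod ⊗[ZMod 2] DualSteenrod) :=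
  Submodule.span (ZMod 2)
    {t | ∃ a b : ℕ →₀ ℕ, isAA2 a ∧ bgWeight a ≤ 8 * (j - 1) ∧ isExtMono b ∧
      t = (MvPolynomial.monomial a 1) ⊗ₜ[ZMod 2] (MvPolynomial.monomial b 1)}

/-- `M₂(j) ⊗ N₁(1)`: basis tensors with left weight exactly `8j` and right factor
in `N₁(1)`. -/
noncomputable def S2 (j : ℕ) : Submodule (ZMod 2) (DualSteenrod ⊗[ZMod 2] DualSteenrod) :=
  Submodule.span (ZMod 2)
    {t | ∃ a b : ℕ →₀ ℕ, isAA2 a ∧ bgWeight a = 8 * j ∧ isN11Mono b ∧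
      t = (MvPolynomial.monomial a 1) ⊗ₜ[ZMod 2] (MvPolynomial.monomial b 1)}

open MvPolynomial

lemma bgWeight_add_s15 (a b : ℕ →₀ ℕ) : bgWeight (a + b) = bgWeight a + bgWeight b :=
  Finsupp.sum_add_index' (fun _ => zero_mul _) fun _ _ _ => add_mul _ _ _

lemma eight_dvd_bgWeight {a : ℕ →₀ ℕ} (ha : isAA2 a) : 8 ∣ bgWeight a := by
  obtain ⟨h0, h1, h2⟩ := ha
  refine Finset.dvd_sum fun k _ => ?_
  rcases k with _ | _ | _ | k
  · simpa using h0
  · simpa [pow_one] using mul_dvd_mul_right h1 2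
  · simpa using mul_dvd_mul_right h2 4
  · exact Dvd.dvd.mul_left ⟨2 ^ k, by rw [pow_add]; ring⟩ _

lemma eq_single_add_single_add_single {b : ℕ →₀ ℕ} (hb : ∀ k, 3 ≤ k → b k = 0) :
    b = Finsupp.single 0 (b 0) + Finsupp.single 1 (b 1) + Finsupp.single 2 (b 2) := by
  ext k
  rcases k with _ | _ | _ | k <;> simp
  exact hb (k + 3) (by omega)

lemma bgWeight_le_twelve {b : ℕ →₀ ℕ} (hb : isExtMono b) : bgWeight b ≤ 12 := by
  obtain ⟨h0, h1, h2, h3⟩ := hb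
  rw [eq_single_add_single_add_single h3, bgWeight_add_s15, bgWeight_add_s15, bgWeight_single,
    bgWeight_single, bgWeight_single]
  omega

lemma bgWeight_add_le_iff {a b : ℕ →₀ ℕ} (ha : isAA2 a) (hb : isExtMono b) {j : ℕ}
    (hj : 1 ≤ j) :
    bgWeight (a + b) ≤ 4 * (2 * j + 1) ↔
      bgWeight a ≤ 8 * (j - 1) ∨ bgWeight a = 8 * j ∧ bgWeight b ≤ 4 := by
  obtain ⟨c, hc⟩ := eight_dvd_bgWeight ha
  have := bgWeight_le_twelve hb
  rw [bgWeight_add_s15]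
  omega

lemma dLow_apply_zero (d : ℕ →₀ ℕ) : dLow d 0 = d 0 % 8 := by simp [dLow]

lemma dLow_apply_one (d : ℕ →₀ ℕ) : dLow d 1 = d 1 % 4 := by simp [dLow]

lemma dLow_apply_two (d : ℕ →₀ ℕ) : dLow d 2 = d 2 % 2 := by simp [dLow]

lemma dLow_apply_of_three_le (d : ℕ →₀ ℕ) {k : ℕ} (hk : 3 ≤ k) : dLow d k = 0 := by
  simp [dLow, Finsupp.single_apply]
  omega

lemma dLow_le (d : ℕ →₀ ℕ) : dLow d ≤ d := fun k => by
  rcases k with _ | _ | _ | k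
  · exact (dLow_apply_zero d).trans_le (Nat.mod_le _ _)
  · exact (dLow_apply_one d).trans_le (Nat.mod_le _ _)
  · exact (dLow_apply_two d).trans_le (Nat.mod_le _ _)
  · exact (dLow_apply_of_three_le d (by omega)).trans_le (Nat.zero_le _)

lemma dHigh_add_dLow (d : ℕ →₀ ℕ) : dHigh d + dLow d = d :=
  tsub_add_cancel_of_le (dLow_le d)

lemma isAA2_dHigh (d : ℕ →₀ ℕ) : isAA2 (dHigh d) := by
  refine ⟨?_, ?_, ?_⟩ <;>
    simp only [dHigh, Finsupp.tsub_apply, dLow_apply_zero, dLow_apply_one, dLow_apply_two] <;>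
    omega

lemma isExtMono_dLow {d : ℕ →₀ ℕ} (hd : isAA1 d) : isExtMono (dLow d) := by
  obtain ⟨h0, h1⟩ := hd
  refine ⟨?_, ?_, ?_, fun k => dLow_apply_of_three_le d⟩ <;>
    simp only [dLow_apply_zero, dLow_apply_one, dLow_apply_two] <;>
    omega

lemma dLow_add {a b : ℕ →₀ ℕ} (ha : isAA2 a) (hb : isExtMono b) : dLow (a + b) = b := by
  obtain ⟨ha0, ha1, ha2⟩ := ha
  obtain ⟨hb0, hb1, hb2, hb3⟩ := hb
  ext k
  obtain hk | hk := lt_or_ge k 3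
  · interval_cases k <;>
      simp only [Finsupp.coe_add, Pi.add_apply, dLow_apply_zero, dLow_apply_one,
        dLow_apply_two] <;>
      omega
  · rw [dLow_apply_of_three_le _ hk, hb3 _ hk]

lemma dHigh_add {a b : ℕ →₀ ℕ} (ha : isAA2 a) (hb : isExtMono b) : dHigh (a + b) = a := by
  rw [dHigh, dLow_add ha hb, add_tsub_cancel_right]

lemma isAA1_add {a b : ℕ →₀ ℕ} (ha : isAA2 a) (hb : isExtMono b) : isAA1 (a + b) := by
  obtain ⟨ha0, ha1, -⟩ := ha
  obtain ⟨hb0, hb1, -⟩ := hb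
  constructor <;> simp only [Finsupp.coe_add, Pi.add_apply] <;> omega

lemma image_dHigh_dLow (P : (ℕ →₀ ℕ) → Prop) :
    (fun d => (dHigh d, dLow d)) '' {d | isAA1 d ∧ P d} =
      {p | isAA2 p.1 ∧ isExtMono p.2 ∧ P (p.1 + p.2)} := by
  ext ⟨a, b⟩
  constructor
  · rintro ⟨d, ⟨hd, hP⟩, h⟩
    obtain ⟨rfl, rfl⟩ := Prod.mk.inj h
    exact ⟨isAA2_dHigh d, isExtMono_dLow hd, by rwa [dHigh_add_dLow]⟩
  · rintro ⟨ha, hb, hP⟩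
    exact ⟨a + b, ⟨isAA1_add ha hb, hP⟩, Prod.ext (dHigh_add ha hb) (dLow_add ha hb)⟩

noncomputable def tensorBasisMonomials :
    Module.Basis ((ℕ →₀ ℕ) × (ℕ →₀ ℕ)) (ZMod 2) (DualSteenrod ⊗[ZMod 2] DualSteenrod) :=
  (basisMonomials ℕ (ZMod 2)).tensorProduct (basisMonomials ℕ (ZMod 2))

lemma tensorBasisMonomials_apply (p : (ℕ →₀ ℕ) × (ℕ →₀ ℕ)) :
    tensorBasisMonomials p = monomial p.1 1 ⊗ₜ[ZMod 2] monomial p.2 1 := by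
  rw [tensorBasisMonomials, Module.Basis.tensorProduct_apply]
  rfl

lemma map_tau_span_basisMonomials (s : Set (ℕ →₀ ℕ)) :
    (Submodule.span (ZMod 2) (basisMonomials ℕ (ZMod 2) '' s)).map tau =
      Submodule.span (ZMod 2)
        (tensorBasisMonomials '' ((fun d => (dHigh d, dLow d)) '' s)) := by
  rw [Submodule.map_span, Set.image_image, Set.image_image]
  congr 1
  refine Set.image_congr fun d _ => ?_
  rw [tau, Module.Basis.constr_basis, tensorBasisMonomials_apply]

lemma N1_eq_span (m : ℕ) :
    N1 m = Submodule.span (ZMod 2)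
      (basisMonomials ℕ (ZMod 2) '' {d | isAA1 d ∧ bgWeight d ≤ 4 * m}) := by
  rw [N1]
  congr 1
  ext x
  simp [coe_basisMonomials, eq_comm, and_assoc]

lemma S1_eq_span (j : ℕ) :
    S1 j = Submodule.span (ZMod 2) (tensorBasisMonomials ''
      {p | isAA2 p.1 ∧ isExtMono p.2 ∧ bgWeight p.1 ≤ 8 * (j - 1)}) := by
  rw [S1]
  congr 1
  ext t
  constructor
  · rintro ⟨a, b, ha, hwa, hb, rfl⟩
    exact ⟨(a, b), ⟨ha, hb, hwa⟩, tensorBasisMonomials_apply _⟩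
  · rintro ⟨⟨a, b⟩, ⟨ha, hb, hwa⟩, rfl⟩
    exact ⟨a, b, ha, hwa, hb, tensorBasisMonomials_apply _⟩

lemma S2_eq_span (j : ℕ) :
    S2 j = Submodule.span (ZMod 2) (tensorBasisMonomials ''
      {p | isAA2 p.1 ∧ isExtMono p.2 ∧ bgWeight p.1 = 8 * j ∧ bgWeight p.2 ≤ 4}) := by
  rw [S2]
  congr 1
  ext t
  constructor
  · rintro ⟨a, b, ha, hwa, ⟨hb, hwb⟩, rfl⟩
    exact ⟨(a, b), ⟨ha, hb, hwa, hwb⟩, tensorBasisMonomials_apply _⟩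
  · rintro ⟨⟨a, b⟩, ⟨ha, hb, hwa, hwb⟩, rfl⟩
    exact ⟨a, b, ha, hwa, ⟨hb, hwb⟩, tensorBasisMonomials_apply _⟩

/-- as `F₂`-vector spaces,
`τ(N₁(2j+1)) = (N₂(j-1) ⊗ (A(2) ⫽ A(1))_*) ⊕ (M₂(j) ⊗ N₁(1))`. -/
theorem stmt15 (j : ℕ) (hj : 1 ≤ j) :
    Submodule.map tau (N1 (2 * j + 1)) = S1 j ⊔ S2 j ∧ Disjoint (S1 j) (S2 j) := by
  rw [N1_eq_span, S1_eq_span, S2_eq_span, map_tau_span_basisMonomials, image_dHigh_dLow,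
    ← Submodule.span_union, ← Set.image_union]
  refine ⟨?_, tensorBasisMonomials.linearIndependent.disjoint_span_image ?_⟩
  · congr 2
    ext ⟨a, b⟩
    simp only [Set.mem_ofPred_eq, Set.mem_union]
    by_cases h : isAA2 a ∧ isExtMono b
    · simp only [h, bgWeight_add_le_iff h.1 h.2 hj, true_and]
    · tauto
  · rw [Set.disjoint_left]
    rintro ⟨a, b⟩ ⟨-, -, h₁⟩ ⟨-, -, h₂, -⟩
    omega
end

section
/- Define sequences of integers a_j, b_j for j ≥ 0 by a_0 = 21, b_0 = 9, a_1 = 15, b_1 = 2, and for j ≥ 1: a_{2j} = max{a_{j-1} - 8j - 2, a_j - 8j}, b_{2j} = max{b_{j-1} - 8j - 3, b_j - 8j}, a_{2j+1} = a_j - 8j, b_{2j+1} = b_j - 8j. Then for all j ≥ 2 we have a_j ≤ 8j - 5 and b_j ≤ 8j - 18. -/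
/-- the integer sequences `a`, `b` defined by
`a 0 = 21, b 0 = 9, a 1 = 15, b 1 = 2` and the recurrences
`a (2j) = max (a (j-1) - 8j - 2) (a j - 8j)`,
`b (2j) = max (b (j-1) - 8j - 3) (b j - 8j)`,
`a (2j+1) = a j - 8j`, `b (2j+1) = b j - 8j` (for `j ≥ 1`)
satisfy `a j ≤ 8j - 5` and `b j ≤ 8j - 18` for all `j ≥ 2`. -/
theorem stmt17 (a b : ℕ → ℤ)
    (ha0 : a 0 = 21) (hb0 : b 0 = 9) (ha1 : a 1 = 15) (hb1 : b 1 = 2)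
    (haeven : ∀ j : ℕ, 1 ≤ j →
      a (2 * j) = max (a (j - 1) - 8 * (j : ℤ) - 2) (a j - 8 * (j : ℤ)))
    (hbeven : ∀ j : ℕ, 1 ≤ j →
      b (2 * j) = max (b (j - 1) - 8 * (j : ℤ) - 3) (b j - 8 * (j : ℤ)))
    (haodd : ∀ j : ℕ, 1 ≤ j → a (2 * j + 1) = a j - 8 * (j : ℤ))
    (hbodd : ∀ j : ℕ, 1 ≤ j → b (2 * j + 1) = b j - 8 * (j : ℤ)) :
    ∀ j : ℕ, 2 ≤ j → a j ≤ 8 * (j : ℤ) - 5 ∧ b j ≤ 8 * (j : ℤ) - 18 := by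
  intro j
  induction j using Nat.strong_induction_on with
  | _ j ih =>
  intro hj
  rcases Nat.even_or_odd j with ⟨k, hk⟩ | ⟨k, hk⟩
  · -- j = 2k
    have hjk : j = 2 * k := by omega
    subst hjk
    have hk1 : 1 ≤ k := by omega
    have hae := haeven k hk1
    have hbe := hbeven k hk1
    rcases Nat.lt_or_ge k 3 with hk3 | hk3
    · interval_cases k
      · simp only [show (1:ℕ) - 1 = 0 from rfl, ha0, ha1, hb0, hb1] at hae hbe
        constructor
        · rw [hae]; refine max_le (by norm_num) (by norm_num)
        · rw [hbe]; refine max_le (by norm_num) (by norm_num)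
      · have h2 := ih 2 (by omega) (by omega)
        have h2a := h2.1; have h2b := h2.2
        norm_num at h2a h2b
        simp only [show (2:ℕ) - 1 = 1 from rfl, ha1, hb1] at hae hbe
        constructor
        · rw [hae]; refine max_le (by norm_num) (by push_cast; linarith)
        · rw [hbe]; refine max_le (by norm_num) (by push_cast; linarith)
    · have hkm := ih (k - 1) (by omega) (by omega)
      have hkk := ih k (by omega) (by omega)
      have hcast : ((k - 1 : ℕ) : ℤ) = (k : ℤ) - 1 := by
        have : (1:ℕ) ≤ k := hk1; push_cast [this]; ring
      rw [hcast] at hkm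
      constructor
      · rw [hae]; push_cast
        refine max_le (by linarith [hkm.1]) (by linarith [hkk.1])
      · rw [hbe]; push_cast
        refine max_le (by linarith [hkm.2]) (by linarith [hkk.2])
  · -- j = 2k + 1
    subst hk
    have hk1 : 1 ≤ k := by omega
    have hao := haodd k hk1
    have hbo := hbodd k hk1
    rcases Nat.lt_or_ge k 2 with hk2 | hk2
    · interval_cases k
      rw [ha1] at hao; rw [hb1] at hbo
      constructor
      · rw [hao]; norm_num
      · rw [hbo]; norm_num
    · have hkk := ih k (by omega) hk2
      constructor
      · rw [hao]; push_cast; linarith [hkk.1]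
      · rw [hbo]; push_cast; linarith [hkk.2]
end
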